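/- arXiv:2501.11575 — 5 statements merged into one kernel-verified Lean document; each statement's English description precedes it below -/
import Mathlib

section
/- Let $A$ be a commutative ring, $L$ a proper primary $A$-submodule of an $A$-module $M$, and $W$ a multiplicatively closed subset of $A$. Then $L$ is a $W$-factroid of $M$ if and only if $W \cap \mathrm{Ann}_A(M/L) = \emptyset$. -/
lemma pow_mem_of_mul_closed {A : Type*} [Monoid A] {W : Set A}
    (hW : ∀ a ∈ W, ∀ b ∈ W, a * b ∈ W) {w : A} (hw : w ∈ W) :
    ∀ n : ℕ, 0 < n → w ^ n ∈ W := by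
  intro n hn
  induction n with
  | zero => omega
  | succ k ih =>
    rcases Nat.eq_zero_or_pos k with hk | hk
    · simpa [hk] using hw
    · rw [pow_succ]
      exact hW _ (ih hk) _ hw

/-- Let `A` be a commutative ring, `L` a proper primary submodule of the `A`-module
`M`, and `W` a multiplicatively closed subset of `A`.  Then `L` is a `W`-factroid of
`M` iff `W ∩ Ann_A(M/L) = ∅`. -/
theorem stmt_8 {A M : Type*} [CommRing A] [AddCommGroup M] [Module A M]
    (L : Submodule A M) (hL : L ≠ ⊤)
    (hprimary : ∀ r : A, ({x : M | r • x ∈ L} = (L : Set M)) ∨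
      ∃ n : ℕ, ∀ x : M, r ^ n • x ∈ L)
    (W : Set A) (hW : ∀ a ∈ W, ∀ b ∈ W, a * b ∈ W) :
    (∀ w ∈ W, ∀ x : M, w • x ∈ L → x ∈ L) ↔
      W ∩ {r : A | ∀ x : M, r • x ∈ L} = ∅ := by
  constructor
  · intro hfac
    ext w
    simp only [Set.mem_inter_iff, Set.mem_setOf_eq, Set.mem_empty_iff_false, iff_false,
      not_and]
    intro hwW hann
    apply hL
    rw [eq_top_iff]
    intro x _
    exact hfac w hwW x (hann x)
  · intro hdisj w hwW x hx
    rcases hprimary w with h | ⟨n, hn⟩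
    · have : x ∈ {y : M | w • y ∈ L} := hx
      rw [h] at this
      exact this
    · rcases Nat.eq_zero_or_pos n with hn0 | hn0
      · exfalso
        apply hL
        rw [eq_top_iff]
        intro y _
        simpa [hn0] using hn y
      · exfalso
        have : w ^ n ∈ W ∩ {r : A | ∀ x : M, r • x ∈ L} :=
          ⟨pow_mem_of_mul_closed hW hwW n hn0, hn⟩
        rw [hdisj] at this
        exact this
end

section
/- A nontrivial commutative ring $A$ is an integral domain if and only if $A$ itself is the only nonzero ideal of $A$ that is also a factroid of $A$ (i.e., a $\mathrm{reg}(A)$-factroid). -/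
/-!
In a domain every nonzero element is a nonzerodivisor, and a factroid ideal containing a
nonzerodivisor `x` contains `1`, since `x * 1 ∈ I`. Conversely, if `x * y = 0` with `x ≠ 0`,
the annihilator of `x` is a factroid ideal containing `y` but not `1`, so it is `⊥` and `y = 0`.
-/

namespace Ideal

variable {A : Type*} [CommRing A]

/-- The factroid condition, stated for ideals (which are in particular additive subgroups). -/
def IsFactroid (I : Ideal A) : Prop :=
  ∀ b ∈ nonZeroDivisors A, ∀ a : A, b * a ∈ I → a ∈ I

theorem IsFactroid.eq_top_of_mem_nonZeroDivisors {I : Ideal A} (hI : I.IsFactroid) {x : A}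
    (hxI : x ∈ I) (hx : x ∈ nonZeroDivisors A) : I = ⊤ :=
  (eq_top_iff_one I).mpr (hI x hx 1 (by rwa [mul_one]))

theorem isFactroid_torsionOf (x : A) : (torsionOf A A x).IsFactroid := by
  intro b hb a hba
  rw [mem_torsionOf_iff, smul_eq_mul] at hba ⊢
  exact (mem_nonZeroDivisors_iff.mp hb).2 _ (by rw [← hba]; ring)

end Ideal

/-- A nontrivial commutative ring `A` is an integral domain iff `A` is the only
nonzero ideal of `A` that is a factroid of `A` (absorbs division by
nonzerodivisors). -/
theorem stmt_11 {A : Type*} [CommRing A] [Nontrivial A] :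
    IsDomain A ↔
      ∀ I : Ideal A, I ≠ ⊥ →
        (∀ b ∈ nonZeroDivisors A, ∀ a : A, b * a ∈ I → a ∈ I) → I = ⊤ := by
  constructor
  · intro _ I hI hfac
    obtain ⟨x, hxI, hx⟩ := Submodule.exists_mem_ne_zero_of_ne_bot hI
    exact Ideal.IsFactroid.eq_top_of_mem_nonZeroDivisors hfac hxI
      (mem_nonZeroDivisors_of_ne_zero hx)
  · intro h
    suffices NoZeroDivisors A from NoZeroDivisors.to_isDomain A
    refine ⟨fun {x y} hxy => or_iff_not_imp_left.mpr fun hx => ?_⟩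
    have hyI : y ∈ Ideal.torsionOf A A x := by
      rwa [Ideal.mem_torsionOf_iff, smul_eq_mul, mul_comm]
    have hI : Ideal.torsionOf A A x ≠ ⊤ := by rwa [Ne, Ideal.torsionOf_eq_top_iff]
    have hbot : Ideal.torsionOf A A x = ⊥ :=
      not_not.mp fun hne => hI (h _ hne (Ideal.isFactroid_torsionOf x))
    rwa [hbot, Submodule.mem_bot] at hyI
end

section
/- Let $A$ be a ring in which every element is a sum of units. Then $A$ is the only factroid of $A$ containing a left-regular element. Consequently, if $A$ is additionally a commutative integral domain, then the only factroids of $A$ are $\{0\}$ and $A$. -/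
/-- An element `b` of a ring is left-regular if `b * y = 0` implies `y = 0`. -/
def LeftRegular {A : Type*} [Ring A] (b : A) : Prop := ∀ y : A, b * y = 0 → y = 0

/-- A factroid of `A`: an additive subgroup `F` such that `b * a ∈ F` with `b`
left-regular implies `a ∈ F`. -/
def IsFactroid {A : Type*} [Ring A] (F : AddSubgroup A) : Prop :=
  ∀ b : A, LeftRegular b → ∀ a : A, b * a ∈ F → a ∈ F

/-- If every element of `A` is a sum of units, then `A` is the only factroid of `A`
containing a left-regular element; consequently, if `A` is moreover a commutative
integral domain, the only factroids of `A` are `{0}` and `A`. -/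
theorem stmt_12 {A : Type*} [Ring A]
    (hsum : ∀ a : A, ∃ (n : ℕ) (u : Fin n → Aˣ), a = ∑ i, (u i : A)) :
    (∀ F : AddSubgroup A, IsFactroid F →
      (∃ c ∈ F, LeftRegular c) → F = ⊤) ∧
    ((∀ a b : A, a * b = b * a) → (∀ a b : A, a * b = 0 → a = 0 ∨ b = 0) →
      (0 : A) ≠ 1 →
      ∀ F : AddSubgroup A, IsFactroid F → F = ⊥ ∨ F = ⊤) := by
  have main : ∀ F : AddSubgroup A, IsFactroid F →
      (∃ c ∈ F, LeftRegular c) → F = ⊤ := by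
    intro F hF ⟨c, hc, hreg⟩
    -- 1 ∈ F
    have h1 : (1 : A) ∈ F := hF c hreg 1 (by simpa using hc)
    -- every unit is in F
    have hu : ∀ u : Aˣ, (u : A) ∈ F := by
      intro u
      have hlr : LeftRegular ((u⁻¹ : Aˣ) : A) := by
        intro y hy
        have := congrArg (fun z => (u : A) * z) hy
        simpa [← mul_assoc] using this
      exact hF _ hlr u (by simpa using h1)
    -- every element is in F
    ext a
    simp only [AddSubgroup.mem_top, iff_true]
    obtain ⟨n, u, rfl⟩ := hsum a
    exact AddSubgroup.sum_mem F fun i _ => hu (u i)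
  refine ⟨main, ?_⟩
  intro hcomm hdom h01 F hF
  by_cases hbot : F = ⊥
  · exact Or.inl hbot
  · right
    obtain ⟨c, hc, hc0⟩ : ∃ c ∈ F, c ≠ 0 := by
      by_contra h
      push_neg at h
      exact hbot (by ext x; simp [AddSubgroup.mem_bot]; exact ⟨h x, fun hx => hx ▸ F.zero_mem⟩)
    exact main F hF ⟨c, hc, fun y hy => ((hdom c y hy).resolve_left hc0)⟩
end

section
/- Let $D$ be an integral domain with quotient field $K$, let $L/K$ be an algebraic field extension, and let $A$ be a subring of $L$ containing $D$. If $F$ is a $\mathrm{reg}(A)$-factroid of an $A$-submodule $M$ of $L$ with $D \subseteq F$, then $A \subseteq F$. In particular, $A$ is the only factroid of $A$ containing $D$. -/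
/-- Let `D` be a domain with fraction field `K`, `L/K` an algebraic field extension,
and `A` a subring of `L` containing `D`.  If `F` is a `reg(A)`-factroid of an
`A`-submodule `M` of `L` with `D ⊆ F`, then `A ⊆ F`.  In particular, `A` is the only
factroid of `A` containing `D`. -/
theorem stmt_13 {D K L : Type*} [CommRing D] [IsDomain D] [Field K] [Algebra D K]
    [IsFractionRing D K] [Field L] [Algebra K L] [Algebra.IsAlgebraic K L]
    [Algebra D L] [IsScalarTower D K L]
    (A : Subring L) (hDA : Set.range (algebraMap D L) ⊆ (A : Set L)) :
    (∀ M F : Set L,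
      -- `M` is an `A`-submodule of `L`
      ((0 : L) ∈ M ∧ (∀ x ∈ M, ∀ y ∈ M, x + y ∈ M) ∧ (∀ x ∈ M, -x ∈ M) ∧
        (∀ a ∈ (A : Set L), ∀ x ∈ M, a * x ∈ M)) →
      -- `F` is a `reg(A)`-factroid of `M`
      (F ⊆ M ∧ (0 : L) ∈ F ∧ (∀ x ∈ F, ∀ y ∈ F, x + y ∈ F) ∧ (∀ x ∈ F, -x ∈ F) ∧
        (∀ a ∈ (A : Set L), a ≠ 0 → ∀ x ∈ M, a * x ∈ F → x ∈ F)) →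
      -- `D ⊆ F`
      Set.range (algebraMap D L) ⊆ F →
      (A : Set L) ⊆ F) ∧
    (∀ F : Set L,
      (F ⊆ (A : Set L) ∧ (0 : L) ∈ F ∧ (∀ x ∈ F, ∀ y ∈ F, x + y ∈ F) ∧
        (∀ x ∈ F, -x ∈ F) ∧
        (∀ a ∈ (A : Set L), a ≠ 0 → ∀ x ∈ (A : Set L), a * x ∈ F → x ∈ F)) →
      Set.range (algebraMap D L) ⊆ F →
      F = (A : Set L)) := by
  have inj : Function.Injective (algebraMap D L) := by
    rw [IsScalarTower.algebraMap_eq D K L]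
    exact (algebraMap K L).injective.comp (IsFractionRing.injective D K)
  have part1 : ∀ M F : Set L,
      ((0 : L) ∈ M ∧ (∀ x ∈ M, ∀ y ∈ M, x + y ∈ M) ∧ (∀ x ∈ M, -x ∈ M) ∧
        (∀ a ∈ (A : Set L), ∀ x ∈ M, a * x ∈ M)) →
      (F ⊆ M ∧ (0 : L) ∈ F ∧ (∀ x ∈ F, ∀ y ∈ F, x + y ∈ F) ∧ (∀ x ∈ F, -x ∈ F) ∧
        (∀ a ∈ (A : Set L), a ≠ 0 → ∀ x ∈ M, a * x ∈ F → x ∈ F)) →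
      Set.range (algebraMap D L) ⊆ F →
      (A : Set L) ⊆ F := by
    rintro M F ⟨hM0, hMadd, hMneg, hMmul⟩ ⟨hFM, hF0, hFadd, hFneg, hFdiv⟩ hDF
    intro a ha
    rcases eq_or_ne a 0 with rfl | ha0
    · exact hF0
    have h1F : (1 : L) ∈ F := hDF ⟨1, map_one _⟩
    have haM : a ∈ M := by simpa using hMmul a ha 1 (hFM h1F)
    have halg : IsAlgebraic D a :=
      (IsFractionRing.isAlgebraic_iff D K L).mpr (Algebra.IsAlgebraic.isAlgebraic a)
    obtain ⟨p, hp, hpa⟩ := halg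
    obtain ⟨q, hq, hndvd⟩ := p.exists_eq_pow_rootMultiplicity_mul_and_not_dvd hp 0
    have hc0 : q.coeff 0 ≠ 0 := by
      intro h
      exact hndvd (by simpa [Polynomial.X_dvd_iff] using h)
    have hqa : Polynomial.aeval a q = 0 := by
      rw [hq] at hpa
      simp only [map_mul, map_pow, map_sub, Polynomial.aeval_X, Polynomial.aeval_C,
        map_zero, sub_zero] at hpa
      rcases mul_eq_zero.mp hpa with h | h
      · exact absurd (pow_eq_zero_iff'.mp h).1 ha0
      · exact h
    set n := q.natDegree with hn
    set b : L := -(∑ i ∈ Finset.range n, algebraMap D L (q.coeff (i + 1)) * a ^ i) with hb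
    have hbA : b ∈ (A : Set L) := by
      refine A.neg_mem (Subring.sum_mem A fun i _ => A.mul_mem (hDA ⟨_, rfl⟩) ?_)
      exact A.pow_mem ha i
    have key : a * b = algebraMap D L (q.coeff 0) := by
      have hsum : ∑ i ∈ Finset.range (n + 1), algebraMap D L (q.coeff i) * a ^ i = 0 := by
        have := hqa
        rw [Polynomial.aeval_eq_sum_range] at this
        simpa [Algebra.smul_def] using this
      rw [Finset.sum_range_succ'] at hsum
      have : ∑ i ∈ Finset.range n, algebraMap D L (q.coeff (i + 1)) * a ^ (i + 1)
          = -(algebraMap D L (q.coeff 0)) := by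
        simpa using eq_neg_of_add_eq_zero_left hsum
      calc a * b = -(∑ i ∈ Finset.range n, algebraMap D L (q.coeff (i + 1)) * a ^ (i + 1)) := by
            rw [hb, mul_neg, Finset.mul_sum]
            congr 1
            refine Finset.sum_congr rfl fun i _ => ?_
            ring
        _ = algebraMap D L (q.coeff 0) := by rw [this, neg_neg]
    have hc0L : algebraMap D L (q.coeff 0) ≠ 0 := fun h => hc0 (inj (by simpa using h))
    have hb0 : b ≠ 0 := by
      intro h
      rw [h, mul_zero] at key
      exact hc0L key.symm
    have : b * a ∈ F := by
      rw [mul_comm, key]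
      exact hDF ⟨_, rfl⟩
    exact hFdiv b hbA hb0 a haM this
  refine ⟨part1, fun F ⟨hFA, hF0, hFadd, hFneg, hFdiv⟩ hDF => ?_⟩
  refine Set.Subset.antisymm hFA (part1 (A : Set L) F ?_ ?_ hDF)
  · exact ⟨A.zero_mem, fun x hx y hy => A.add_mem hx hy, fun x hx => A.neg_mem hx,
      fun a ha x hx => A.mul_mem ha hx⟩
  · exact ⟨hFA, hF0, hFadd, hFneg, hFdiv⟩
end

section
/- Let $A$ be a nontrivial commutative ring. Then the following are equivalent: (a) $u + v \in A^\times \cup J(A)$ for all units $u, v$ (i.e., $A$ is sublocalizable); (b) $A^\times \cup J(A)$ is a subring of $A$; (c) $A^\times \cup J(A)$ is a local subring of $A$ with maximal ideal $J(A)$ whose units are exactly $A^\times$; (d) there exists a proper ideal $I$ of $A$ such that $A^\times \cup I$ is a subring of $A$ — and in this case necessarily $I = J(A)$. -/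
/-!
A unit plus an element of the Jacobson radical is a unit, so `A^× ∪ J(A)` is always closed
under multiplication, negation and under adding `J(A)`; the only missing closure property is
exactly sublocalizability. In the subring `A^× ∪ J(A)` every element is a unit or lies in
`J(A)`, whence `1 - x` is a unit, so it is local. Conversely, if `A^× ∪ I` is a subring for a
proper ideal `I`, then `1 + I` consists of units (an element `1 + x` of `I` would put `1` in
`I`), so `I ⊆ J(A)`; and `J(A) ⊆ I`, because `j = (1 + j) - 1` lies in the subring but is not
a unit.
-/

open Ideal

section

variable {A : Type*} [CommRing A] {B : Subring A} {I : Ideal A}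

def IsSublocalizable (A : Type*) [CommRing A] : Prop :=
  ∀ u v : A, IsUnit u → IsUnit v → IsUnit (u + v) ∨ u + v ∈ (⊥ : Ideal A).jacobson

def Ideal.unitsUnion (I : Ideal A) : Set A :=
  {a | IsUnit a} ∪ (I : Set A)

theorem Ideal.mem_unitsUnion {a : A} : a ∈ I.unitsUnion ↔ IsUnit a ∨ a ∈ I :=
  Iff.rfl

theorem IsUnit.add_mem_jacobson_bot {u j : A} (hu : IsUnit u)
    (hj : j ∈ (⊥ : Ideal A).jacobson) : IsUnit (u + j) := by
  obtain ⟨u, rfl⟩ := hu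
  convert u.isUnit.mul (mem_jacobson_bot.mp hj ↑u⁻¹) using 1
  rw [mul_add, mul_one, mul_left_comm, Units.mul_inv, mul_one, add_comm]

theorem Ideal.jacobson_bot_ne_top [Nontrivial A] : (⊥ : Ideal A).jacobson ≠ ⊤ :=
  fun h => bot_ne_top (jacobson_eq_top_iff.mp h)

theorem Ideal.not_isUnit_of_mem_jacobson_bot [Nontrivial A] {x : A}
    (hx : x ∈ (⊥ : Ideal A).jacobson) : ¬IsUnit x :=
  fun hu => jacobson_bot_ne_top (eq_top_of_isUnit_mem _ hx hu)

def IsSublocalizable.unitsUnionJacobson (h : IsSublocalizable A) : Subring A where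
  carrier := (⊥ : Ideal A).jacobson.unitsUnion
  one_mem' := Or.inl isUnit_one
  zero_mem' := Or.inr (zero_mem _)
  mul_mem' := by
    rintro a b (ha | ha) (hb | hb)
    · exact Or.inl (ha.mul hb)
    · exact Or.inr (mul_mem_left _ _ hb)
    · exact Or.inr (mul_mem_right _ _ ha)
    · exact Or.inr (mul_mem_right _ _ ha)
  add_mem' := by
    rintro a b (ha | ha) (hb | hb)
    · exact h a b ha hb
    · exact Or.inl (ha.add_mem_jacobson_bot hb)
    · exact Or.inl (add_comm a b ▸ hb.add_mem_jacobson_bot ha)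
    · exact Or.inr (add_mem ha hb)
  neg_mem' := by
    rintro a (ha | ha)
    · exact Or.inl ha.neg
    · exact Or.inr (neg_mem ha)

theorem Subring.isUnit_iff_isUnit_coe_of_forall_isUnit_mem
    (hB : ∀ a : A, IsUnit a → a ∈ B) (x : B) : IsUnit x ↔ IsUnit (x : A) := by
  refine ⟨fun h => h.map B.subtype, fun ⟨v, hv⟩ => ?_⟩
  refine IsUnit.of_mul_eq_one (⟨↑v⁻¹, hB _ v⁻¹.isUnit⟩ : B) (Subtype.ext ?_)
  simp [← hv]

namespace Subring

theorem mem_iff_of_coe_eq_unitsUnion (hB : (B : Set A) = I.unitsUnion) (a : A) :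
    a ∈ B ↔ IsUnit a ∨ a ∈ I :=
  Set.ext_iff.mp hB a

theorem isSublocalizable_of_coe_eq (hB : (B : Set A) = (⊥ : Ideal A).jacobson.unitsUnion) :
    IsSublocalizable A := by
  have mem := mem_iff_of_coe_eq_unitsUnion hB
  exact fun u v hu hv => (mem _).mp (B.add_mem ((mem u).mpr (Or.inl hu)) ((mem v).mpr (Or.inl hv)))

theorem le_jacobson_bot_of_coe_eq (hB : (B : Set A) = I.unitsUnion) (hI : I ≠ ⊤) :
    I ≤ (⊥ : Ideal A).jacobson := by
  have mem := mem_iff_of_coe_eq_unitsUnion hB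
  intro x hx
  refine mem_jacobson_bot.mpr fun y => ?_
  have hxy : x * y ∈ I := mul_mem_right _ _ hx
  refine ((mem _).mp (B.add_mem ((mem _).mpr (Or.inr hxy)) B.one_mem)).resolve_right
    fun h => hI ((eq_top_iff_one I).mpr ?_)
  simpa using I.sub_mem h hxy

theorem jacobson_bot_le_of_coe_eq [Nontrivial A] (hB : (B : Set A) = I.unitsUnion) :
    (⊥ : Ideal A).jacobson ≤ I := by
  have mem := mem_iff_of_coe_eq_unitsUnion hB
  intro j hj
  have hjB : j ∈ B := by
    simpa using B.sub_mem ((mem _).mpr (Or.inl (isUnit_one.add_mem_jacobson_bot hj))) B.one_mem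
  exact ((mem _).mp hjB).resolve_left (not_isUnit_of_mem_jacobson_bot hj)

theorem eq_jacobson_bot_of_coe_eq [Nontrivial A] (hB : (B : Set A) = I.unitsUnion)
    (hI : I ≠ ⊤) : I = (⊥ : Ideal A).jacobson :=
  le_antisymm (le_jacobson_bot_of_coe_eq hB hI) (jacobson_bot_le_of_coe_eq hB)

section UnitsUnionJacobson

variable (hB : (B : Set A) = (⊥ : Ideal A).jacobson.unitsUnion)
include hB

theorem isUnit_iff_of_coe_eq (x : B) : IsUnit x ↔ IsUnit (x : A) :=
  isUnit_iff_isUnit_coe_of_forall_isUnit_mem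
    (fun _ ha => (mem_iff_of_coe_eq_unitsUnion hB _).mpr (Or.inl ha)) x

theorem coe_mem_jacobson_bot_iff_of_coe_eq [Nontrivial A] (x : B) :
    (x : A) ∈ (⊥ : Ideal A).jacobson ↔ ¬IsUnit x := by
  rw [isUnit_iff_of_coe_eq hB]
  exact ⟨not_isUnit_of_mem_jacobson_bot,
    ((mem_iff_of_coe_eq_unitsUnion hB _).mp x.2).resolve_left⟩

theorem isLocalRing_of_coe_eq [Nontrivial A] : IsLocalRing B := by
  refine IsLocalRing.of_isUnit_or_isUnit_one_sub_self fun x => ?_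
  rw [isUnit_iff_of_coe_eq hB, isUnit_iff_of_coe_eq hB]
  push_cast
  rw [sub_eq_add_neg]
  exact ((mem_iff_of_coe_eq_unitsUnion hB _).mp x.2).imp_right
    fun hx => isUnit_one.add_mem_jacobson_bot (neg_mem hx)

end UnitsUnionJacobson

end Subring

end

/-- Characterizations of sublocalizable rings.  Let `A` be a nontrivial commutative
ring, `J = J(A)` its Jacobson radical, and `S = A^× ∪ J(A)`.  The following are
equivalent: (a) a sum of two units lies in `A^× ∪ J(A)`; (b) `S` is a subring of
`A`; (c) `S` is a local subring of `A` with maximal ideal `J(A)` (i.e. whose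
nonunits are exactly `J(A)`) and whose units are exactly those of `A`; (d) there is
a proper ideal `I` of `A` such that `A^× ∪ I` is a subring of `A` — and any such
`I` necessarily equals `J(A)`. -/
theorem stmt_19 {A : Type*} [CommRing A] [Nontrivial A] :
    let J : Ideal A := (⊥ : Ideal A).jacobson
    let S : Set A := {a : A | IsUnit a} ∪ (J : Set A)
    ((∀ u v : A, IsUnit u → IsUnit v → (IsUnit (u + v) ∨ u + v ∈ J)) ↔
      (∃ B : Subring A, (B : Set A) = S)) ∧
    ((∃ B : Subring A, (B : Set A) = S) ↔
      (∃ B : Subring A, (B : Set A) = S ∧ IsLocalRing B ∧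
        (∀ x : B, IsUnit x ↔ IsUnit (x : A)) ∧
        (∀ x : B, (x : A) ∈ J ↔ ¬ IsUnit x))) ∧
    ((∃ B : Subring A, (B : Set A) = S) ↔
      (∃ I : Ideal A, I ≠ ⊤ ∧
        ∃ B : Subring A, (B : Set A) = {a : A | IsUnit a} ∪ (I : Set A))) ∧
    (∀ I : Ideal A, I ≠ ⊤ →
      (∃ B : Subring A, (B : Set A) = {a : A | IsUnit a} ∪ (I : Set A)) →
      I = J) := by
  intro J S
  have eq_J : ∀ I : Ideal A, I ≠ ⊤ →
      (∃ B : Subring A, (B : Set A) = {a : A | IsUnit a} ∪ (I : Set A)) → I = J :=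
    fun _ hI ⟨_, hB⟩ => Subring.eq_jacobson_bot_of_coe_eq hB hI
  refine ⟨⟨fun h => ⟨IsSublocalizable.unitsUnionJacobson h, rfl⟩,
      fun ⟨_, hB⟩ => Subring.isSublocalizable_of_coe_eq hB⟩,
    ⟨fun ⟨B, hB⟩ => ⟨B, hB, Subring.isLocalRing_of_coe_eq hB,
      Subring.isUnit_iff_of_coe_eq hB, Subring.coe_mem_jacobson_bot_iff_of_coe_eq hB⟩, fun ⟨B, hB, _⟩ => ⟨B, hB⟩⟩,
    ⟨fun ⟨B, hB⟩ => ⟨J, jacobson_bot_ne_top, B, hB⟩,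
      fun ⟨I, hI, B, hB⟩ => ⟨B, hB.trans (by rw [eq_J I hI ⟨B, hB⟩])⟩⟩, eq_J⟩
end
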